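/- Let Θ be an NDMALL proof net with a ready ⊓/⊓ cut L₀, let Θ' be the contractum obtained by ⊓-reduction with substitution p_L = p_{L'} = 1, let φ' be any valuation for Θ', and let φ be the valuation for Θ extending φ' by φ(p_L) = φ(p_{L'}) = 1. For any switching S' of Θ' with valuation φ', define the switching S of Θ with valuation φ agreeing with S' on all ⅋-links and &-links and choosing as jumps of L and L' the premises B and B^⊥ respectively. Then acyclicity and connectedness of the graph Θ_S implies acyclicity and connectedness of the graph Θ'_{S'}. -/
import Mathlib


namespace NDMALLNets

/-- NDMALL formulas: atoms, ⊗, ⅋, &, ⊕ and the self-dual ⊓ ("nondeterministic with"). -/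
inductive Form : Type
  | pos : ℕ → Form
  | neg : ℕ → Form
  | tens : Form → Form → Form
  | parr : Form → Form → Form
  | withf : Form → Form → Form
  | plus : Form → Form → Form
  | nwith : Form → Form → Form
  deriving DecidableEq

/-- Linear negation; ⊓ is self-dual. -/
def Form.dual : Form → Form
  | .pos n => .neg n
  | .neg n => .pos n
  | .tens A B => .parr A.dual B.dual
  | .parr A B => .tens A.dual B.dual
  | .withf A B => .plus A.dual B.dual
  | .plus A B => .withf A.dual B.dual
  | .nwith A B => .nwith A.dual B.dual

/-- Links of NDMALL proof structures.  Vertices (formula occurrences) are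
named by natural numbers; for each kind of link we record its premises and
conclusions in order. -/
inductive Link : Type
  | id : ℕ → ℕ → Link           -- ID link, conclusions A, A⊥
  | cut : ℕ → ℕ → Link          -- Cut link, premises A, A⊥
  | gax : List ℕ → Link         -- generalized axiom, conclusions A₁,…,Aₙ
  | tens : ℕ → ℕ → ℕ → Link     -- ⊗: premises A, B, conclusion A ⊗ B
  | parr : ℕ → ℕ → ℕ → Link     -- ⅋: premises A, B, conclusion A ⅋ B
  | withf : ℕ → ℕ → ℕ → Link    -- &: premises A, B, conclusion A & B
  | plus1 : ℕ → ℕ → Link        -- ⊕₁: premise A, conclusion A ⊕ B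
  | plus2 : ℕ → ℕ → Link        -- ⊕₂: premise B, conclusion A ⊕ B
  | nwith : ℕ → ℕ → ℕ → Link    -- ⊓: premises A, B, conclusion A ⊓ B
  deriving DecidableEq

def Link.prems : Link → List ℕ
  | .id _ _ => []
  | .cut a b => [a, b]
  | .gax _ => []
  | .tens a b _ => [a, b]
  | .parr a b _ => [a, b]
  | .withf a b _ => [a, b]
  | .plus1 a _ => [a]
  | .plus2 b _ => [b]
  | .nwith a b _ => [a, b]

def Link.concls : Link → List ℕ
  | .id a b => [a, b]
  | .cut _ _ => []
  | .gax l => l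
  | .tens _ _ c => [c]
  | .parr _ _ c => [c]
  | .withf _ _ c => [c]
  | .plus1 _ c => [c]
  | .plus2 _ c => [c]
  | .nwith _ _ c => [c]

/-- The links carrying an eigenweight (boolean variable): & and ⊓ links. -/
def Link.eigenB : Link → Bool
  | .withf _ _ _ => true
  | .nwith _ _ _ => true
  | _ => false

/-- A valuation of the eigenweights (eigenweights are named by the
identifier of the corresponding & or ⊓ link). -/
abbrev Val : Type := ℕ → Bool

/-- An element of the boolean algebra generated by the eigenweights,
represented by its table of values under all valuations. -/
abbrev Weight : Type := Val → Bool

/-- Overriding a valuation at one eigenweight. -/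
def setTag (t : ℕ) (bv : Bool) (φ : Val) : Val := fun n => if n = t then bv else φ n

/-- Raw data of a proof structure: a finite set of vertices (formula
occurrences), their formulas, a finite (multi)set of links named by
identifiers, and weights for formulas and links. -/
structure PS : Type where
  verts : Finset ℕ
  form : ℕ → Form
  lids : Finset ℕ
  link : ℕ → Link
  wF : ℕ → Weight
  wL : ℕ → Weight

/-- The eigenweights of a proof structure: identifiers of its &/⊓ links. -/
def PS.tags (Θ : PS) : Finset ℕ := Θ.lids.filter fun i => (Θ.link i).eigenB

/-- `w` is a monomial built from (negations of) eigenweights in `T`. -/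
def IsMonomialOver (T : Finset ℕ) (w : Weight) : Prop :=
  ∃ S : Finset ℕ, S ⊆ T ∧ ∃ sgn : ℕ → Bool,
    ∀ φ : Val, w φ = decide (∀ t ∈ S, φ t = sgn t)

/-- Order on weights (u ≤ v in the boolean algebra). -/
def wle (u v : Weight) : Prop := ∀ φ, u φ = true → v φ = true

/-- The weight `w` contains (mentions) the eigenweight `t`. -/
def Mentions (w : Weight) (t : ℕ) : Prop :=
  ∃ φ : Val, w (setTag t true φ) ≠ w (setTag t false φ)

/-- The constant weight 1. -/
def weightOne (w : Weight) : Prop := ∀ φ, w φ = true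

/-- Well-typedness of a link with respect to the formulas of the vertices. -/
def LinkTyped (f : ℕ → Form) : Link → Prop
  | .id a b => f b = (f a).dual
  | .cut a b => f b = (f a).dual
  | .gax _ => True
  | .tens a b c => f c = Form.tens (f a) (f b)
  | .parr a b c => f c = Form.parr (f a) (f b)
  | .withf a b c => f c = Form.withf (f a) (f b)
  | .plus1 a c => ∃ B, f c = Form.plus (f a) B
  | .plus2 b c => ∃ A, f c = Form.plus A (f b)
  | .nwith a b c => f c = Form.nwith (f a) (f b)

/-- Condition (f): weights of the premises of a link, in terms of the weight
of the link; for a & or ⊓ link `i`, the premises get weights w(L)·p_L and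
w(L)·¬p_L, where the eigenweight p_L is the identifier `i` itself. -/
def WeightCond (Θ : PS) (i : ℕ) : Prop :=
  match Θ.link i with
  | .cut a b => (∀ φ, Θ.wF a φ = Θ.wL i φ) ∧ (∀ φ, Θ.wF b φ = Θ.wL i φ)
  | .tens a b _ => (∀ φ, Θ.wF a φ = Θ.wL i φ) ∧ (∀ φ, Θ.wF b φ = Θ.wL i φ)
  | .parr a b _ => (∀ φ, Θ.wF a φ = Θ.wL i φ) ∧ (∀ φ, Θ.wF b φ = Θ.wL i φ)
  | .plus1 a _ => ∀ φ, Θ.wF a φ = Θ.wL i φ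
  | .plus2 b _ => ∀ φ, Θ.wF b φ = Θ.wL i φ
  | .withf a b _ =>
      (∀ φ, Θ.wF a φ = (Θ.wL i φ && φ i)) ∧ (∀ φ, Θ.wF b φ = (Θ.wL i φ && !(φ i)))
  | .nwith a b _ =>
      (∀ φ, Θ.wF a φ = (Θ.wL i φ && φ i)) ∧ (∀ φ, Θ.wF b φ = (Θ.wL i φ && !(φ i)))
  | _ => True

/-- Conditions (a)–(g) making the data `Θ` an NDMALL proof structure. -/
structure IsProofStructure (Θ : PS) : Prop where
  links_sub : ∀ i ∈ Θ.lids, ∀ v ∈ (Θ.link i).prems ++ (Θ.link i).concls, v ∈ Θ.verts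
  links_nodup : ∀ i ∈ Θ.lids, ((Θ.link i).prems ++ (Θ.link i).concls).Nodup
  typed : ∀ i ∈ Θ.lids, LinkTyped Θ.form (Θ.link i)
  -- (a) each formula is the premise of at most one link …
  prem_unique : ∀ v ∈ Θ.verts, ∀ i ∈ Θ.lids, ∀ j ∈ Θ.lids,
    v ∈ (Θ.link i).prems → v ∈ (Θ.link j).prems → i = j
  -- … and the conclusion of at least one link
  concl_ex : ∀ v ∈ Θ.verts, ∃ i ∈ Θ.lids, v ∈ (Θ.link i).concls
  -- (b) w(A) = Σ_{L has A as conclusion} w(L)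
  weight_sum : ∀ v ∈ Θ.verts, ∀ φ,
    Θ.wF v φ = true ↔ ∃ i ∈ Θ.lids, v ∈ (Θ.link i).concls ∧ Θ.wL i φ = true
  -- (c) conclusions of Θ have weight 1
  concl_w1 : ∀ v ∈ Θ.verts, (∀ i ∈ Θ.lids, v ∉ (Θ.link i).prems) → weightOne (Θ.wF v)
  -- (d) every weight occurring in Θ is a (non-zero) monomial of eigenweights
  monoF : ∀ v ∈ Θ.verts, IsMonomialOver Θ.tags (Θ.wF v)
  monoL : ∀ i ∈ Θ.lids, IsMonomialOver Θ.tags (Θ.wL i)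
  -- (e) a weight containing ε.p_L is ≤ w(L)
  mention_leF : ∀ v ∈ Θ.verts, ∀ t ∈ Θ.tags, Mentions (Θ.wF v) t → wle (Θ.wF v) (Θ.wL t)
  mention_leL : ∀ i ∈ Θ.lids, ∀ t ∈ Θ.tags, Mentions (Θ.wL i) t → wle (Θ.wL i) (Θ.wL t)
  -- (f)
  weight_cond : ∀ i ∈ Θ.lids, WeightCond Θ i
  -- (g) distinct links with the same conclusion have different weights
  concl_distinct : ∀ i ∈ Θ.lids, ∀ j ∈ Θ.lids, i ≠ j →
    ∀ v, v ∈ (Θ.link i).concls → v ∈ (Θ.link j).concls → Θ.wL i ≠ Θ.wL j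

/-- The vertex `v` depends on the eigenweight `t` in the slice φ(Θ):
it is the conclusion of a link L' with φ(w(L')) = 1 and φ_L(w(L')) = 0. -/
def DependsOn (Θ : PS) (φ : Val) (t : ℕ) (v : ℕ) : Prop :=
  ∃ j ∈ Θ.lids, v ∈ (Θ.link j).concls ∧ Θ.wL j φ = true ∧
    Θ.wL j (setTag t (!(φ t)) φ) = false

/-- A switching: a valuation of the eigenweights, a left/right selection for
every ⅋ link and a jump selection for every & and ⊓ link of the slice (the
jump must depend on the eigenweight of the link in the slice). -/
structure Switching (Θ : PS) where
  val : Val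
  selPar : ℕ → Bool
  selJump : ℕ → ℕ
  jump_dep : ∀ i ∈ Θ.lids, (Θ.link i).eigenB = true → Θ.wL i val = true →
    DependsOn Θ val i (selJump i)

/-- The edges contributed by the link `i` under the switching `S`:
conclusions of an ID link, premises of a Cut link, premise–conclusion for ⊕
links, both premises to the conclusion for ⊗ links, the selected premise for
⅋ links, and the selected jump for & and ⊓ links. -/
def linkEdge (Θ : PS) (S : Switching Θ) (i : ℕ) (x y : ℕ) : Prop :=
  match Θ.link i with
  | .id a b => x = a ∧ y = b
  | .cut a b => x = a ∧ y = b
  | .gax _ => False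
  | .tens a b c => (x = a ∨ x = b) ∧ y = c
  | .parr a b c => x = (if S.selPar i then a else b) ∧ y = c
  | .withf _ _ c => x = S.selJump i ∧ y = c
  | .plus1 a c => x = a ∧ y = c
  | .plus2 b c => x = b ∧ y = c
  | .nwith _ _ c => x = S.selJump i ∧ y = c

/-- The graph Θ_S associated with a switching `S` of `Θ`. -/
def switchGraph (Θ : PS) (S : Switching Θ) : SimpleGraph ℕ :=
  SimpleGraph.fromRel fun x y =>
    ∃ i ∈ Θ.lids, Θ.wL i S.val = true ∧ linkEdge Θ S i x y

/-- The vertices of the slice determined by the valuation of `S`. -/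
def sliceVert (Θ : PS) (S : Switching Θ) (v : ℕ) : Prop :=
  v ∈ Θ.verts ∧ Θ.wF v S.val = true

/-- The graph Θ_S is acyclic and connected (on the vertices of the slice). -/
def GoodGraph (Θ : PS) (S : Switching Θ) : Prop :=
  (switchGraph Θ S).IsAcyclic ∧
    ∀ x y, sliceVert Θ S x → sliceVert Θ S y → (switchGraph Θ S).Reachable x y

/-- Θ is a proof net iff for every switching S the graph Θ_S is connected
and acyclic. -/
def IsProofNet (Θ : PS) : Prop :=
  IsProofStructure Θ ∧ ∀ S : Switching Θ, GoodGraph Θ S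

/-- `v` is a conclusion of the proof structure (a vertex that is not the
premise of any link). -/
def PS.isConcl (Θ : PS) (v : ℕ) : Prop :=
  v ∈ Θ.verts ∧ ∀ i ∈ Θ.lids, v ∉ (Θ.link i).prems

end NDMALLNets
namespace NDMALLNets

/-- Substituting the boolean values `bv` for the two eigenweights `t`, `t'`
in a valuation. -/
def set2 (t t' : ℕ) (bv : Bool) (φ : Val) : Val := setTag t bv (setTag t' bv φ)

/-- The contractum of a ⊓/⊓ lazy cut-elimination step.  From `Θ` we remove
the vertices in `remV` (the premises `B ⊓ C`, `B⊥ ⊓ C⊥` of the cut) and the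
links in `remL` (the ready cut and the two ⊓ links), substitute the boolean
value `bv` for the eigenweights `t` and `t'` (keeping only the formulas and
links that still have non-zero weight), and add a new cut link (with fresh
identifier `i₀`, of weight 1) between the vertices `u` and `u'`. -/
noncomputable def contract (Θ : PS) (remV remL : Finset ℕ) (t t' : ℕ) (bv : Bool)
    (i₀ u u' : ℕ) : PS :=
  letI : ∀ p : Prop, Decidable p := fun p => Classical.propDecidable p
  { verts := (Θ.verts \ remV).filter fun v => ∃ φ, Θ.wF v (set2 t t' bv φ) = true
    form := Θ.form
    lids := insert i₀ ((Θ.lids \ remL).filter fun i => ∃ φ, Θ.wL i (set2 t t' bv φ) = true)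
    link := fun i => if i = i₀ then Link.cut u u' else Θ.link i
    wF := fun v φ => Θ.wF v (set2 t t' bv φ)
    wL := fun i φ => if i = i₀ then true else Θ.wL i (set2 t t' bv φ) }


section TransferAux

variable (Θ : PS) (remV remL : Finset ℕ) (t t' : ℕ) (bv : Bool) (i₀ u u' : ℕ)

theorem contract_link_self : (contract Θ remV remL t t' bv i₀ u u').link i₀ = Link.cut u u' := by
  letI : ∀ p : Prop, Decidable p := fun p => Classical.propDecidable p
  exact if_pos rfl

theorem contract_link_ne (i : ℕ) (h : i ≠ i₀) :
    (contract Θ remV remL t t' bv i₀ u u').link i = Θ.link i := by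
  letI : ∀ p : Prop, Decidable p := fun p => Classical.propDecidable p
  exact if_neg h

theorem contract_wL_self (φ : Val) : (contract Θ remV remL t t' bv i₀ u u').wL i₀ φ = true := by
  letI : ∀ p : Prop, Decidable p := fun p => Classical.propDecidable p
  exact if_pos rfl

theorem contract_wL_ne (i : ℕ) (h : i ≠ i₀) (φ : Val) :
    (contract Θ remV remL t t' bv i₀ u u').wL i φ = Θ.wL i (set2 t t' bv φ) := by
  letI : ∀ p : Prop, Decidable p := fun p => Classical.propDecidable p
  exact if_neg h

theorem contract_wF (v : ℕ) (φ : Val) :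
    (contract Θ remV remL t t' bv i₀ u u').wF v φ = Θ.wF v (set2 t t' bv φ) := rfl

theorem contract_lids_mem (i : ℕ) :
    i ∈ (contract Θ remV remL t t' bv i₀ u u').lids ↔
      i = i₀ ∨ (i ∈ Θ.lids ∧ i ∉ remL ∧ ∃ φ, Θ.wL i (set2 t t' bv φ) = true) := by
  letI : ∀ p : Prop, Decidable p := fun p => Classical.propDecidable p
  constructor
  · intro h
    rcases Finset.mem_insert.mp h with h | h
    · exact Or.inl h
    · obtain ⟨h1, h2⟩ := Finset.mem_filter.mp h
      obtain ⟨h3, h4⟩ := Finset.mem_sdiff.mp h1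
      exact Or.inr ⟨h3, h4, h2⟩
  · rintro (h | ⟨h1, h2, h3⟩)
    · exact Finset.mem_insert.mpr (Or.inl h)
    · exact Finset.mem_insert.mpr (Or.inr (Finset.mem_filter.mpr ⟨Finset.mem_sdiff.mpr ⟨h1, h2⟩, h3⟩))

theorem contract_verts_mem (v : ℕ) :
    v ∈ (contract Θ remV remL t t' bv i₀ u u').verts ↔
      (v ∈ Θ.verts ∧ v ∉ remV) ∧ ∃ φ, Θ.wF v (set2 t t' bv φ) = true := by
  letI : ∀ p : Prop, Decidable p := fun p => Classical.propDecidable p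
  constructor
  · intro h
    obtain ⟨h1, h2⟩ := Finset.mem_filter.mp h
    exact ⟨Finset.mem_sdiff.mp h1, h2⟩
  · intro h
    exact Finset.mem_filter.mpr ⟨Finset.mem_sdiff.mpr h.1, h.2⟩

end TransferAux

theorem switchGraph_adj (Θ : PS) (S : Switching Θ) (x y : ℕ) :
    (switchGraph Θ S).Adj x y ↔ x ≠ y ∧
      ((∃ i ∈ Θ.lids, Θ.wL i S.val = true ∧ linkEdge Θ S i x y) ∨
       (∃ i ∈ Θ.lids, Θ.wL i S.val = true ∧ linkEdge Θ S i y x)) :=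
  SimpleGraph.fromRel_adj _ x y

/-- Abstract form of the ⊓-reduction switching-transfer statement: `Θ'` is any
proof structure related to `Θ` as the contractum is (same links away from the
cut, a fresh cut `j₀` between `vB` and `vB'`), `S` and `S'` are corresponding
switchings.  Then a good graph for `Θ, S` gives a good graph for `Θ', S'`. -/
theorem goodGraph_transfer (Θ : PS) (hstr : IsProofStructure Θ)
    (i₀ iL iL' j₀ a b vB vC vB' vC' : ℕ)
    (hi₀ : i₀ ∈ Θ.lids) (hiL : iL ∈ Θ.lids) (hiL' : iL' ∈ Θ.lids)
    (hcut : Θ.link i₀ = Link.cut a b)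
    (hL : Θ.link iL = Link.nwith vB vC a)
    (hL' : Θ.link iL' = Link.nwith vB' vC' b)
    (hready : weightOne (Θ.wL i₀))
    (ha : ∀ j ∈ Θ.lids, a ∈ (Θ.link j).concls → j = iL)
    (hb : ∀ j ∈ Θ.lids, b ∈ (Θ.link j).concls → j = iL')
    (hfresh : j₀ ∉ Θ.lids)
    (Θ' : PS) (S' : Switching Θ') (S : Switching Θ)
    (hpar : ∀ i, S.selPar i = S'.selPar i)
    (hjL : S.selJump iL = vB) (hjL' : S.selJump iL' = vB')
    (hjother : ∀ i, i ≠ iL → i ≠ iL' → S.selJump i = S'.selJump i)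
    (hj₀lids : j₀ ∈ Θ'.lids)
    (hlids_mp : ∀ i ∈ Θ'.lids, i = j₀ ∨ (i ∈ Θ.lids ∧ i ≠ i₀ ∧ i ≠ iL ∧ i ≠ iL'))
    (hlids_mpr : ∀ i ∈ Θ.lids, i ≠ i₀ → i ≠ iL → i ≠ iL' → Θ.wL i S.val = true → i ∈ Θ'.lids)
    (hverts : ∀ v ∈ Θ'.verts, v ∈ Θ.verts ∧ v ≠ a ∧ v ≠ b)
    (hlinkj : Θ'.link j₀ = Link.cut vB vB')
    (hlinkne : ∀ i, i ≠ j₀ → Θ'.link i = Θ.link i)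
    (hwLj : Θ'.wL j₀ S'.val = true)
    (hwLne : ∀ i, i ≠ j₀ → Θ'.wL i S'.val = Θ.wL i S.val)
    (hwFS : ∀ v, Θ'.wF v S'.val = Θ.wF v S.val) :
    GoodGraph Θ S → GoodGraph Θ' S' := by
  intro hGood
  obtain ⟨hacyc, hconn⟩ := hGood
  -- distinctness of the relevant vertices
  have hnd0 : a ≠ b := by
    have h := hstr.links_nodup i₀ hi₀
    rw [hcut] at h
    simp [Link.prems, Link.concls] at h
    tauto
  have hvBa : vB ≠ a := by
    have h := hstr.links_nodup iL hiL
    rw [hL] at h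
    simp [Link.prems, Link.concls] at h
    tauto
  have hvB'b : vB' ≠ b := by
    have h := hstr.links_nodup iL' hiL'
    rw [hL'] at h
    simp [Link.prems, Link.concls] at h
    tauto
  have haV : a ∈ Θ.verts :=
    hstr.links_sub i₀ hi₀ a (by rw [hcut]; simp [Link.prems, Link.concls])
  have hbV : b ∈ Θ.verts :=
    hstr.links_sub i₀ hi₀ b (by rw [hcut]; simp [Link.prems, Link.concls])
  have hvBV : vB ∈ Θ.verts :=
    hstr.links_sub iL hiL vB (by rw [hL]; simp [Link.prems, Link.concls])
  have hvB'V : vB' ∈ Θ.verts :=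
    hstr.links_sub iL' hiL' vB' (by rw [hL']; simp [Link.prems, Link.concls])
  have hiLi₀ : iL ≠ i₀ := by
    intro h; rw [h, hcut] at hL; exact Link.noConfusion hL
  have hiL'i₀ : iL' ≠ i₀ := by
    intro h; rw [h, hcut] at hL'; exact Link.noConfusion hL'
  have hiLiL' : iL ≠ iL' := by
    intro h; rw [h, hL'] at hL; injection hL with h1 h2 h3; exact hnd0 h3.symm
  have hprem_i₀_a : a ∈ (Θ.link i₀).prems := by rw [hcut]; simp [Link.prems]
  have hprem_i₀_b : b ∈ (Θ.link i₀).prems := by rw [hcut]; simp [Link.prems]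
  have hprem_iL_vB : vB ∈ (Θ.link iL).prems := by rw [hL]; simp [Link.prems]
  have hprem_iL'_vB' : vB' ∈ (Θ.link iL').prems := by rw [hL']; simp [Link.prems]
  have hvBb : vB ≠ b := by
    intro h; subst h
    exact hiLi₀ (hstr.prem_unique vB hvBV iL hiL i₀ hi₀ hprem_iL_vB hprem_i₀_b)
  have hvB'a : vB' ≠ a := by
    intro h; subst h
    exact hiL'i₀ (hstr.prem_unique vB' hvB'V iL' hiL' i₀ hi₀ hprem_iL'_vB' hprem_i₀_a)
  have hvBvB' : vB ≠ vB' := by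
    intro h
    exact hiLiL' (hstr.prem_unique vB hvBV iL hiL iL' hiL' hprem_iL_vB
      (h ▸ hprem_iL'_vB'))
  have havB' : a ≠ vB' := fun h => hvB'a h.symm
  have hbvB' : b ≠ vB' := fun h => hvB'b h.symm
  -- weights of the two ⊓-links in the slice
  have hwc0 := hstr.weight_cond i₀ hi₀
  rw [WeightCond, hcut] at hwc0
  have hwFa : Θ.wF a S.val = true := (hwc0.1 S.val).trans (hready S.val)
  have hwFb : Θ.wF b S.val = true := (hwc0.2 S.val).trans (hready S.val)
  have hwiL : Θ.wL iL S.val = true := by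
    obtain ⟨j, hj, hjc, hjw⟩ := (hstr.weight_sum a haV S.val).mp hwFa
    rwa [ha j hj hjc] at hjw
  have hwiL' : Θ.wL iL' S.val = true := by
    obtain ⟨j, hj, hjc, hjw⟩ := (hstr.weight_sum b hbV S.val).mp hwFb
    rwa [hb j hj hjc] at hjw
  -- jumps of common links never land on a or b
  have hnojump : ∀ i, i ∈ Θ.lids → i ≠ i₀ → i ≠ iL → i ≠ iL' → Θ.wL i S.val = true →
      (Θ.link i).eigenB = true → S.selJump i ≠ a ∧ S.selJump i ≠ b := by
    intro i hi h0 h1 h2 hw heig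
    have hij : i ≠ j₀ := fun h => hfresh (h ▸ hi)
    have hi' : i ∈ Θ'.lids := hlids_mpr i hi h0 h1 h2 hw
    have hdep := S'.jump_dep i hi' (by rw [hlinkne i hij]; exact heig)
      (by rw [hwLne i hij]; exact hw)
    obtain ⟨j, hj, hjc, -, -⟩ := hdep
    rw [← hjother i h1 h2] at hjc
    constructor <;> intro hEq <;> rw [hEq] at hjc
    · rcases hlids_mp j hj with rfl | ⟨hjl, hj1, hj2, hj3⟩
      · rw [hlinkj] at hjc; simp [Link.concls] at hjc
      · rw [hlinkne j (fun h => hfresh (h ▸ hjl))] at hjc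
        exact hj2 (ha j hjl hjc)
    · rcases hlids_mp j hj with rfl | ⟨hjl, hj1, hj2, hj3⟩
      · rw [hlinkj] at hjc; simp [Link.concls] at hjc
      · rw [hlinkne j (fun h => hfresh (h ▸ hjl))] at hjc
        exact hj3 (hb j hjl hjc)
  -- edges of common links avoid a and b
  have hnotab : ∀ i, i ∈ Θ.lids → i ≠ i₀ → i ≠ iL → i ≠ iL' → Θ.wL i S.val = true →
      ∀ x y, linkEdge Θ S i x y → (x ≠ a ∧ x ≠ b) ∧ (y ≠ a ∧ y ≠ b) := by
    intro i hi h0 h1 h2 hw x y hxy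
    have hconcl : ∀ v, v ∈ (Θ.link i).concls → v ≠ a ∧ v ≠ b := by
      intro v hv
      constructor
      · rintro rfl; exact h1 (ha i hi hv)
      · rintro rfl; exact h2 (hb i hi hv)
    have hprem : ∀ v, v ∈ (Θ.link i).prems → v ≠ a ∧ v ≠ b := by
      intro v hv
      constructor
      · intro hEq
        rw [hEq] at hv
        exact h0 (hstr.prem_unique a haV i hi i₀ hi₀ hv hprem_i₀_a)
      · intro hEq
        rw [hEq] at hv
        exact h0 (hstr.prem_unique b hbV i hi i₀ hi₀ hv hprem_i₀_b)
    unfold linkEdge at hxy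
    cases hlk : Θ.link i with
    | id c d =>
      rw [hlk] at hxy
      have h' : x = c ∧ y = d := hxy
      obtain ⟨rfl, rfl⟩ := h'
      exact ⟨hconcl _ (by rw [hlk]; simp [Link.concls]),
             hconcl _ (by rw [hlk]; simp [Link.concls])⟩
    | cut c d =>
      rw [hlk] at hxy
      have h' : x = c ∧ y = d := hxy
      obtain ⟨rfl, rfl⟩ := h'
      exact ⟨hprem _ (by rw [hlk]; simp [Link.prems]),
             hprem _ (by rw [hlk]; simp [Link.prems])⟩
    | gax l =>
      rw [hlk] at hxy
      exact absurd hxy (by simp)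
    | tens c d e =>
      rw [hlk] at hxy
      have h' : (x = c ∨ x = d) ∧ y = e := hxy
      obtain ⟨hx, rfl⟩ := h'
      refine ⟨?_, hconcl _ (by rw [hlk]; simp [Link.concls])⟩
      rcases hx with rfl | rfl
      · exact hprem _ (by rw [hlk]; simp [Link.prems])
      · exact hprem _ (by rw [hlk]; simp [Link.prems])
    | parr c d e =>
      rw [hlk] at hxy
      have h' : x = (if S.selPar i then c else d) ∧ y = e := hxy
      obtain ⟨rfl, rfl⟩ := h'
      refine ⟨?_, hconcl _ (by rw [hlk]; simp [Link.concls])⟩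
      by_cases hsp : S.selPar i
      · rw [if_pos hsp]; exact hprem _ (by rw [hlk]; simp [Link.prems])
      · rw [if_neg hsp]; exact hprem _ (by rw [hlk]; simp [Link.prems])
    | withf c d e =>
      rw [hlk] at hxy
      have h' : x = S.selJump i ∧ y = e := hxy
      obtain ⟨rfl, rfl⟩ := h'
      exact ⟨hnojump i hi h0 h1 h2 hw (by rw [hlk]; rfl),
             hconcl _ (by rw [hlk]; simp [Link.concls])⟩
    | plus1 c e =>
      rw [hlk] at hxy
      have h' : x = c ∧ y = e := hxy
      obtain ⟨rfl, rfl⟩ := h'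
      exact ⟨hprem _ (by rw [hlk]; simp [Link.prems]),
             hconcl _ (by rw [hlk]; simp [Link.concls])⟩
    | plus2 c e =>
      rw [hlk] at hxy
      have h' : x = c ∧ y = e := hxy
      obtain ⟨rfl, rfl⟩ := h'
      exact ⟨hprem _ (by rw [hlk]; simp [Link.prems]),
             hconcl _ (by rw [hlk]; simp [Link.concls])⟩
    | nwith c d e =>
      rw [hlk] at hxy
      have h' : x = S.selJump i ∧ y = e := hxy
      obtain ⟨rfl, rfl⟩ := h'
      exact ⟨hnojump i hi h0 h1 h2 hw (by rw [hlk]; rfl),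
             hconcl _ (by rw [hlk]; simp [Link.concls])⟩
  -- correspondence of edges of common links
  have hcorr : ∀ i, i ≠ j₀ → i ≠ iL → i ≠ iL' → ∀ x y,
      (linkEdge Θ S i x y ↔ linkEdge Θ' S' i x y) := by
    intro i hj h1 h2 x y
    have hl : Θ'.link i = Θ.link i := hlinkne i hj
    unfold linkEdge
    rw [hl, hpar i, hjother i h1 h2]
  -- the special edges
  have hadj1 : (switchGraph Θ S).Adj vB a := by
    rw [switchGraph_adj]
    refine ⟨hvBa, Or.inl ⟨iL, hiL, hwiL, ?_⟩⟩
    unfold linkEdge; rw [hL]; exact ⟨hjL.symm, rfl⟩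
  have hadj2 : (switchGraph Θ S).Adj a b := by
    rw [switchGraph_adj]
    refine ⟨hnd0, Or.inl ⟨i₀, hi₀, hready S.val, ?_⟩⟩
    unfold linkEdge; rw [hcut]; exact ⟨rfl, rfl⟩
  have hadj3 : (switchGraph Θ S).Adj b vB' := by
    rw [switchGraph_adj]
    refine ⟨fun h => hvB'b h.symm, Or.inr ⟨iL', hiL', hwiL', ?_⟩⟩
    unfold linkEdge; rw [hL']; exact ⟨hjL'.symm, rfl⟩
  have hadj0 : (switchGraph Θ' S').Adj vB vB' := by
    rw [switchGraph_adj]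
    refine ⟨hvBvB', Or.inl ⟨j₀, hj₀lids, hwLj, ?_⟩⟩
    unfold linkEdge; rw [hlinkj]; exact ⟨rfl, rfl⟩
  -- characterization of the edges of Θ'_{S'}
  have hG'char : ∀ x y, (switchGraph Θ' S').Adj x y →
      s(x, y) = s(vB, vB') ∨
        ((switchGraph Θ S).Adj x y ∧ (x ≠ a ∧ x ≠ b) ∧ (y ≠ a ∧ y ≠ b)) := by
    intro x y hxy
    rw [switchGraph_adj] at hxy
    obtain ⟨hne, hr⟩ := hxy
    have key : ∀ u w, u ≠ w →
        (∃ i ∈ Θ'.lids, Θ'.wL i S'.val = true ∧ linkEdge Θ' S' i u w) →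
        (u = vB ∧ w = vB') ∨
          ((switchGraph Θ S).Adj u w ∧ (u ≠ a ∧ u ≠ b) ∧ (w ≠ a ∧ w ≠ b)) := by
      rintro u w hune ⟨i, hi, hw, hle⟩
      rcases hlids_mp i hi with rfl | ⟨hil, h1, h2, h3⟩
      · left
        unfold linkEdge at hle
        rw [hlinkj] at hle
        exact hle
      · have hij : i ≠ j₀ := fun h => hfresh (h ▸ hil)
        have hle2 : linkEdge Θ S i u w := (hcorr i hij h2 h3 u w).mpr hle
        have hw2 : Θ.wL i S.val = true := by rw [← hwLne i hij]; exact hw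
        have hnab := hnotab i hil h1 h2 h3 hw2 u w hle2
        exact Or.inr ⟨(switchGraph_adj Θ S u w).mpr ⟨hune, Or.inl ⟨i, hil, hw2, hle2⟩⟩, hnab⟩
    rcases hr with h | h
    · rcases key x y hne h with ⟨rfl, rfl⟩ | h'
      · exact Or.inl rfl
      · exact Or.inr h'
    · rcases key y x hne.symm h with ⟨rfl, rfl⟩ | h'
      · exact Or.inl Sym2.eq_swap
      · exact Or.inr ⟨h'.1.symm, h'.2.2, h'.2.1⟩
  -- the folding map
  let f : ℕ → ℕ := fun v => if v = a then vB else if v = b then vB' else v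
  have hfa : f a = vB := if_pos rfl
  have hfb : f b = vB' := by
    show (if b = a then vB else if b = b then vB' else b) = vB'
    rw [if_neg (fun h => hnd0 h.symm), if_pos rfl]
  have hfo : ∀ v, v ≠ a → v ≠ b → f v = v := by
    intro v h1 h2
    show (if v = a then vB else if v = b then vB' else v) = v
    rw [if_neg h1, if_neg h2]
  -- every edge of Θ_S maps to a reachability statement in Θ'_{S'}
  have hback : ∀ x y, (switchGraph Θ S).Adj x y →
      (switchGraph Θ' S').Reachable (f x) (f y) := by
    intro x y hxy
    rw [switchGraph_adj] at hxy
    obtain ⟨hne, hr⟩ := hxy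
    have key : ∀ u w, u ≠ w → (∃ i ∈ Θ.lids, Θ.wL i S.val = true ∧ linkEdge Θ S i u w) →
        (switchGraph Θ' S').Reachable (f u) (f w) := by
      rintro u w hune ⟨i, hi, hw, hle⟩
      by_cases h0 : i = i₀
      · rw [h0] at hle
        unfold linkEdge at hle
        rw [hcut] at hle
        have h' : u = a ∧ w = b := hle
        rw [h'.1, h'.2, hfa, hfb]
        exact hadj0.reachable
      · by_cases h1 : i = iL
        · rw [h1] at hle
          unfold linkEdge at hle
          rw [hL] at hle
          have h' : u = S.selJump iL ∧ w = a := hle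
          rw [h'.1, h'.2, hjL, hfa, hfo vB hvBa hvBb]
        · by_cases h2 : i = iL'
          · rw [h2] at hle
            unfold linkEdge at hle
            rw [hL'] at hle
            have h' : u = S.selJump iL' ∧ w = b := hle
            rw [h'.1, h'.2, hjL', hfb, hfo vB' hvB'a hvB'b]
          · have hij : i ≠ j₀ := fun h => hfresh (h ▸ hi)
            have hnab := hnotab i hi h0 h1 h2 hw u w hle
            rw [hfo u hnab.1.1 hnab.1.2, hfo w hnab.2.1 hnab.2.2]
            refine SimpleGraph.Adj.reachable ?_
            rw [switchGraph_adj]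
            refine ⟨hune, Or.inl ⟨i, hlids_mpr i hi h0 h1 h2 hw, ?_, ?_⟩⟩
            · rw [hwLne i hij]; exact hw
            · exact (hcorr i hij h1 h2 u w).mp hle
    rcases hr with h | h
    · exact key x y hne h
    · exact (key y x hne.symm h).symm
  constructor
  · -- acyclicity
    intro v c hc
    by_cases hmem : s(vB, vB') ∈ c.edges
    · have hreach : ((switchGraph Θ' S').deleteEdges {s(vB, vB')}).Reachable vB vB' :=
        (SimpleGraph.adj_and_reachable_delete_edges_iff_exists_cycle.mpr ⟨v, c, hc, hmem⟩).2
      obtain ⟨q⟩ := hreach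
      have hstep : ∀ {x y : ℕ} (q : ((switchGraph Θ' S').deleteEdges {s(vB, vB')}).Walk x y),
          x ≠ a → x ≠ b → ∃ p : (switchGraph Θ S).Walk x y, a ∉ p.support := by
        intro x y q
        induction q with
        | nil =>
          intro h1 _
          exact ⟨SimpleGraph.Walk.nil, by simp [Ne.symm h1]⟩
        | @cons x z y h q ih =>
          intro h1 h2
          rw [SimpleGraph.deleteEdges_adj] at h
          rcases hG'char x z h.1 with hpair | ⟨hGadj, _, hz⟩
          · exact absurd (by rw [hpair]; exact rfl) h.2
          · obtain ⟨p, hp⟩ := ih hz.1 hz.2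
            refine ⟨SimpleGraph.Walk.cons hGadj p, ?_⟩
            rw [SimpleGraph.Walk.support_cons]
            intro hmem'
            rcases List.mem_cons.mp hmem' with h' | h'
            · exact h1 h'.symm
            · exact hp h'
      obtain ⟨p₀, hp₀⟩ := hstep q hvBa hvBb
      have hQpath : (SimpleGraph.Walk.cons hadj1 (SimpleGraph.Walk.cons hadj2
          (SimpleGraph.Walk.cons hadj3 SimpleGraph.Walk.nil))).IsPath := by
        rw [SimpleGraph.Walk.isPath_def]
        simp [hvBa, hvBb, hvBvB', hnd0, havB', hbvB']
      have hPQ := SimpleGraph.isAcyclic_iff_path_unique.mp hacyc p₀.toPath ⟨_, hQpath⟩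
      have haP : a ∈ (p₀.toPath : (switchGraph Θ S).Walk vB vB').support := by
        rw [hPQ]
        simp
      exact hp₀ (SimpleGraph.Walk.support_toPath_subset p₀ haP)
    · have hsub : ∀ e ∈ c.edges, e ∈ (switchGraph Θ S).edgeSet := by
        intro e
        induction e using Sym2.ind with
        | _ x y =>
          intro he
          rcases hG'char x y (c.adj_of_mem_edges he) with hpair | ⟨hGadj, _, _⟩
          · rw [hpair] at he; exact absurd he hmem
          · exact hGadj
      exact hacyc (c.transfer _ hsub) (hc.transfer hsub)
  · -- connectedness on the slice
    intro x y hx hy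
    obtain ⟨hx1, hx2⟩ := hx
    obtain ⟨hy1, hy2⟩ := hy
    obtain ⟨hxV, hxa, hxb⟩ := hverts x hx1
    obtain ⟨hyV, hya, hyb⟩ := hverts y hy1
    have hxs : sliceVert Θ S x := ⟨hxV, by rw [← hwFS x]; exact hx2⟩
    have hys : sliceVert Θ S y := ⟨hyV, by rw [← hwFS y]; exact hy2⟩
    obtain ⟨p⟩ := hconn x y hxs hys
    have hmap : ∀ {u w : ℕ}, (switchGraph Θ S).Walk u w →
        (switchGraph Θ' S').Reachable (f u) (f w) := by
      intro u w p
      induction p with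
      | nil => exact SimpleGraph.Reachable.refl _
      | cons h p ih => exact (hback _ _ h).trans ih
    have hr := hmap p
    rwa [hfo x hxa hxb, hfo y hya hyb] at hr
end NDMALLNets
namespace NDMALLNets

/-!
STATEMENT 3: Let Θ be an NDMALL proof net with a ready ⊓/⊓ cut L₀ (link `i₀`)
whose premises `B ⊓ C` (vertex `a`) and `B⊥ ⊓ C⊥` (vertex `b`) are the
conclusions of the ⊓-links L (= `iL`, premises `vB`, `vC`) and L' (= `iL'`,
premises `vB'`, `vC'`).  Let Θ' be the contractum obtained by ⊓-reduction with
the substitution p_L = p_{L'} = 1 (adding a cut `j₀` between `B` and `B⊥`).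
For any switching S' of Θ' with valuation φ', let S be the switching of Θ
whose valuation φ extends φ' by φ(p_L) = φ(p_{L'}) = 1, which agrees with S'
on all ⅋-links and all other &/⊓-links, and whose jumps at L and L' are the
premises `B` and `B⊥` respectively.  Then acyclicity and connectedness of Θ_S
imply acyclicity and connectedness of Θ'_{S'}.
-/
theorem nwith_reduction_switching_transfer (Θ : PS) (hstr : IsProofStructure Θ)
    (i₀ iL iL' j₀ a b vB vC vB' vC' : ℕ)
    (hi₀ : i₀ ∈ Θ.lids) (hiL : iL ∈ Θ.lids) (hiL' : iL' ∈ Θ.lids)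
    (hcut : Θ.link i₀ = Link.cut a b)
    (hL : Θ.link iL = Link.nwith vB vC a)
    (hL' : Θ.link iL' = Link.nwith vB' vC' b)
    (hready : weightOne (Θ.wL i₀))
    (ha : ∀ j ∈ Θ.lids, a ∈ (Θ.link j).concls → j = iL)
    (hb : ∀ j ∈ Θ.lids, b ∈ (Θ.link j).concls → j = iL')
    (hfresh : j₀ ∉ Θ.lids)
    (S' : Switching (contract Θ {a, b} {i₀, iL, iL'} iL iL' true j₀ vB vB'))
    (S : Switching Θ)
    (hval : S.val = setTag iL true (setTag iL' true S'.val))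
    (hpar : ∀ i, S.selPar i = S'.selPar i)
    (hjL : S.selJump iL = vB) (hjL' : S.selJump iL' = vB')
    (hjother : ∀ i, i ≠ iL → i ≠ iL' → S.selJump i = S'.selJump i) :
    GoodGraph Θ S →
      GoodGraph (contract Θ {a, b} {i₀, iL, iL'} iL iL' true j₀ vB vB') S' := by
  have hval2 : set2 iL iL' true S'.val = S.val := by rw [hval]; rfl
  refine goodGraph_transfer Θ hstr i₀ iL iL' j₀ a b vB vC vB' vC' hi₀ hiL hiL' hcut hL hL'
    hready ha hb hfresh _ S' S hpar hjL hjL' hjother ?_ ?_ ?_ ?_ ?_ ?_ ?_ ?_ ?_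
  · exact (contract_lids_mem Θ {a, b} {i₀, iL, iL'} iL iL' true j₀ vB vB' j₀).mpr (Or.inl rfl)
  · intro i hi
    rcases (contract_lids_mem Θ {a, b} {i₀, iL, iL'} iL iL' true j₀ vB vB' i).mp hi with
      h | ⟨h1, h2, -⟩
    · exact Or.inl h
    · refine Or.inr ⟨h1, ?_, ?_, ?_⟩ <;> intro hEq <;> exact h2 (by rw [hEq]; simp)
  · intro i hi h0 h1 h2 hw
    refine (contract_lids_mem Θ {a, b} {i₀, iL, iL'} iL iL' true j₀ vB vB' i).mpr
      (Or.inr ⟨hi, by simp [h0, h1, h2], ⟨S'.val, by rw [hval2]; exact hw⟩⟩)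
  · intro v hv
    obtain ⟨⟨h1, h2⟩, -⟩ := (contract_verts_mem Θ {a, b} {i₀, iL, iL'} iL iL' true j₀ vB vB' v).mp hv
    refine ⟨h1, ?_, ?_⟩ <;> intro hEq <;> exact h2 (by rw [hEq]; simp)
  · exact contract_link_self Θ {a, b} {i₀, iL, iL'} iL iL' true j₀ vB vB'
  · exact fun i h => contract_link_ne Θ {a, b} {i₀, iL, iL'} iL iL' true j₀ vB vB' i h
  · exact contract_wL_self Θ {a, b} {i₀, iL, iL'} iL iL' true j₀ vB vB' S'.val
  · intro i h
    rw [contract_wL_ne Θ {a, b} {i₀, iL, iL'} iL iL' true j₀ vB vB' i h S'.val, hval2]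
  · intro v
    rw [contract_wF Θ {a, b} {i₀, iL, iL'} iL iL' true j₀ vB vB' v S'.val, hval2]

end NDMALLNets
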